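/- In the Laufer curve with transition functions ω²_α = φ'_{αβ}(z_β)(ω²_β + ∂_{ω¹_β} B_{αβ}(z_β, ω¹_β)) over a curve Σ, expand B_{αβ}(z, ω) = Σ_{d≥1} σ^{(d)}_{αβ}(z) ω^d. Then the consistency of the transition functions on triple overlaps forces each family {σ^{(d)}_{αβ}} to satisfy the cocycle condition σ^{(d)}_{βγ}(z_γ) + σ^{(d)}_{αβ}(z_β) (φ'_{βγ}(z_γ))^{-1}(φ_{βγ}(z_γ))^{d-1} = σ^{(d)}_{αγ}(z_γ), i.e. σ^{(d)} defines a Čech 1-cocycle with values in the line bundle φ' ⊗ φ^{-(d-1)}, and the coordinate changes ω̃²_α = ω²_α + h_α(z_α)(ω¹_α)^{d-1} change σ^{(d)} by the coboundary h_β − h_α; hence each σ^{(d)} determines a class in H¹(Σ, φ' ⊗ φ^{-(d-1)}). -/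
import Mathlib


/- STATEMENT 16: Laufer transition functions ω²_α = φ'_{αβ}(ω²_β + ∂_{ω¹}B_{αβ}),
B_{αβ}(z,ω) = Σ_d σ^{(d)}_{αβ}(z) ω^d.  We fix a point of a triple overlap U_{αβγ} and a
degree d ≥ 1, and denote by φab, φ'ab, σab, … the values there of the transition functions
of φ, φ' and of the coefficients σ^{(d)} (so ∂_{ω¹}(σ ω^d) = d σ ω^{d−1}).
(i) Consistency of the transition functions on the triple overlap (the identity below,
expressing ω²_α computed via β against ω²_α computed directly from γ, for all fibre
coordinates ω¹, ω²) forces the cocycle condition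
    σ_{βγ} + σ_{αβ} (φ'_{βγ})^{-1} (φ_{βγ})^{d-1} = σ_{αγ},
i.e. σ^{(d)} is a Čech 1-cocycle valued in φ' ⊗ φ^{-(d-1)}.
(ii) The coordinate change ω̃²_α = ω²_α + h_α (ω¹_α)^{d-1} changes σ^{(d)} by the
coboundary h_β − h_α, where h_α expressed in the β-trivialization of φ'⊗φ^{-(d-1)} is
(φ_{αβ}^{d-1}/φ'_{αβ}) h_α.  Hence σ^{(d)} determines a class in H¹(Σ, φ'⊗φ^{-(d-1)}). -/
theorem stmt_16 (d : ℕ) (hd : 1 ≤ d)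
    (φab φbc φac φ'ab φ'bc φ'ac σab σbc σac σ'ab ha hb : ℂ)
    (hφ : φac = φab * φbc) (hφ' : φ'ac = φ'ab * φ'bc)
    (h1 : φ'ab ≠ 0) (h2 : φ'bc ≠ 0) :
    -- (i) triple-overlap compatibility ⟹ cocycle condition
    ((∀ ω1 ω2 : ℂ,
        φ'ab * ((φ'bc * (ω2 + d * σbc * ω1 ^ (d - 1)))
                  + d * σab * (φbc * ω1) ^ (d - 1))
          = φ'ac * (ω2 + d * σac * ω1 ^ (d - 1)))
      → σbc + σab * (φ'bc)⁻¹ * φbc ^ (d - 1) = σac) ∧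
    -- (ii) the change of coordinates ω̃² = ω² + h ω¹^{d-1} shifts σ by a coboundary
    ((∀ ω1 ω2 : ℂ,
        φ'ab * ((ω2 + hb * ω1 ^ (d - 1)) + d * σ'ab * ω1 ^ (d - 1))
          = φ'ab * (ω2 + d * σab * ω1 ^ (d - 1)) + ha * (φab * ω1) ^ (d - 1))
      → (d : ℂ) * (σab - σ'ab) = hb - (φab ^ (d - 1) / φ'ab) * ha) := by
  have hdC : (d : ℂ) ≠ 0 := Nat.cast_ne_zero.mpr (by omega)
  constructor
  · intro h
    have := h 1 0
    simp only [one_pow, mul_one, mul_zero, zero_add] at this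
    rw [hφ'] at this
    have key : φ'ab * (d:ℂ) * (σbc * φ'bc + σab * φbc ^ (d-1)) = φ'ab * (d:ℂ) * (σac * φ'bc) := by
      linear_combination this
    have key2 := mul_left_cancel₀ (mul_ne_zero h1 hdC) key
    field_simp
    linear_combination key2
  · intro h
    have := h 1 0
    simp only [one_pow, mul_one, mul_zero, zero_add] at this
    field_simp at this ⊢
    linear_combination -this
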